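/- arXiv:1202.5523 — 3 statements merged into one kernel-verified Lean document; each statement's English description precedes it below -/
import Mathlib

section
/- Let G be a finite quiver and let c be a nontrivial cycle off a vertex μ that does not have μ as an internal vertex. Then there exist a unique nontrivial simple cycle γ = (μ μ1 ⋯ μ(m−1) μ) off μ on G and unique cycles s1, …, s(m−1), where si is a possibly trivial cycle off μi lying entirely in the deleted subquiver G ∖ {μ, μ1, …, μ(i−1)}, such that c = ((γ ⊙ s(m−1)) ⊙ ⋯ ) ⊙ s1, where every nesting by a nontrivial si is a defined (canonical) nesting product and nesting by a trivial si acts as the identity. -/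
/-- A walk on the quiver with vertex set `V` and edge relation `E`:
a nonempty list of vertices in which consecutive vertices are joined by edges. -/
structure QWalk (V : Type) (E : V → V → Prop) : Type where
  verts : List V
  ne : verts ≠ []
  chain : verts.Chain' E

namespace QWalk

variable {V : Type} {E : V → V → Prop}

/-- The initial vertex of a walk. -/
def first (w : QWalk V E) : V := w.verts.head w.ne

/-- The final vertex of a walk. -/
def last (w : QWalk V E) : V := w.verts.getLast w.ne

/-- The length of a walk (its number of edges). -/
def len (w : QWalk V E) : ℕ := w.verts.length - 1

/-- A walk is trivial when it has length `0`. -/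
def Trivial (w : QWalk V E) : Prop := w.len = 0

/-- A walk is a cycle when its initial and final vertices coincide. -/
def IsCycle (w : QWalk V E) : Prop := w.first = w.last

/-- A cycle off the vertex `β`. -/
def IsCycleOff (w : QWalk V E) (β : V) : Prop := w.IsCycle ∧ w.first = β

/-- A simple path: all vertices distinct (trivial walks included). -/
def IsSimplePath (w : QWalk V E) : Prop := w.verts.Nodup

/-- A simple cycle: a cycle whose internal vertices are pairwise distinct and
different from the base vertex (trivial walks included). -/
def IsSimpleCycle (w : QWalk V E) : Prop := w.IsCycle ∧ w.verts.tail.Nodup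

/-- `IsNest a b w` holds precisely when `(a, b)` is a canonical couple (so the nesting
product `a ⊙ b` is defined) and `w = a ⊙ b`: here `b` is a cycle off `β`, the vertex
sequence of `a` decomposes at the *last* occurrence of `β` as `A₁ ++ [β] ++ A₂`,
the couple is canonical (either `a` is also a cycle off `β`, or no vertex other than
`β` visited by `a` strictly before the last occurrence of `β` is visited by `b`),
and `w` is obtained by replacing that last occurrence of `β` by the whole
vertex sequence of `b`. -/
def IsNest (a b w : QWalk V E) : Prop :=
  ∃ (β : V) (A₁ A₂ : List V),
    b.first = β ∧ b.last = β ∧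
    a.verts = A₁ ++ β :: A₂ ∧ β ∉ A₂ ∧
    (a.IsCycleOff β ∨ ∀ v ∈ A₁, v ≠ β → v ∉ b.verts) ∧
    w.verts = A₁ ++ b.verts ++ A₂

/-- Nesting extended by the convention that nesting with a trivial walk acts as the
identity: `(μ) ⊙ w = w ⊙ (μ) = w` for any walk `w` visiting `μ`. -/
def IsNestE (a b w : QWalk V E) : Prop :=
  IsNest a b w ∨ (a.Trivial ∧ a.first ∈ b.verts ∧ w = b)

end QWalk

namespace QWalk

/-- Left-folded extended nesting product along a list:
`LNestE a [b₁, …, bₖ] w` means `(((a ⊙ b₁) ⊙ b₂) ⊙ ⋯) ⊙ bₖ = w`, every nesting by a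
nontrivial factor being a defined (canonical) nesting product and nesting by a trivial
factor acting as the identity. -/
inductive LNestE {V : Type} {E : V → V → Prop} :
    QWalk V E → List (QWalk V E) → QWalk V E → Prop
  | nil (a : QWalk V E) : LNestE a [] a
  | cons {a b u w : QWalk V E} {l : List (QWalk V E)} :
      IsNestE a b u → LNestE u l w → LNestE a (b :: l) w

end QWalk

/-!
Write `c = μ :: L ++ [μ]` with `μ ∉ L`. The list `L` splits in exactly one way into cycles
`s₁, s₂, …, s_{m-1}` such that `sⱼ` avoids `μ` and the base vertices `μ₁, …, μⱼ₋₁` of the earlier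
ones: the first cycle must run from the first vertex `μ₁` of `L` to the last occurrence of `μ₁`
in `L`, the remainder avoids `μ₁`, and one recurses. With `γ = (μ μ₁ ⋯ μ_{m-1} μ)`, nesting
`s_{m-1}, …, s₁` in turn is canonical at every step and replaces `μⱼ` by `sⱼ`, so it produces `c`.
Conversely, in any factorization each step nests `sⱼ` at the unique occurrence of `μⱼ` after the
prefix `μ μ₁ ⋯ μⱼ₋₁`, so the `sⱼ` concatenate to `L`, and uniqueness of the splitting gives
uniqueness of `(γ, s)`.
-/

namespace List

variable {α : Type*}

theorem eq_and_eq_of_append_cons_eq_of_notMem_left {a : α} {l₁ l₂ r₁ r₂ : List α}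
    (h : l₁ ++ a :: r₁ = l₂ ++ a :: r₂) (h₁ : a ∉ l₁) (h₂ : a ∉ l₂) : l₁ = l₂ ∧ r₁ = r₂ := by
  induction l₁ generalizing l₂ with
  | nil => cases l₂ <;> grind
  | cons b l₁ ih => cases l₂ <;> grind

theorem eq_and_eq_of_append_cons_eq_of_notMem_right {a : α} {l₁ l₂ r₁ r₂ : List α}
    (h : l₁ ++ a :: r₁ = l₂ ++ a :: r₂) (h₁ : a ∉ r₁) (h₂ : a ∉ r₂) : l₁ = l₂ ∧ r₁ = r₂ := by
  have := eq_and_eq_of_append_cons_eq_of_notMem_left (a := a) (l₁ := r₁.reverse)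
    (l₂ := r₂.reverse) (r₁ := l₁.reverse) (r₂ := l₂.reverse)
    (by simpa using congrArg reverse h) (by simpa) (by simpa)
  simpa [and_comm] using this

theorem exists_eq_append_cons_notMem_right {a : α} {l : List α} (ha : a ∈ l) :
    ∃ l₁ l₂, l = l₁ ++ a :: l₂ ∧ a ∉ l₂ := by
  classical
  obtain ⟨r₁, r₂, hr₁, hl, -⟩ := exists_erase_eq (mem_reverse.2 ha)
  exact ⟨r₂.reverse, r₁.reverse, by simpa using congrArg reverse hl, by simpa using hr₁⟩

end List

namespace QWalk

variable {V : Type} {E : V → V → Prop}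

theorem verts_injective : Function.Injective (verts : QWalk V E → List V) := by
  rintro ⟨_, _, _⟩ ⟨_, _, _⟩ rfl
  rfl

theorem verts_eq_first_cons (w : QWalk V E) : w.verts = w.first :: w.verts.tail :=
  (List.cons_head_tail w.ne).symm

theorem first_mem_verts (w : QWalk V E) : w.first ∈ w.verts := List.head_mem _

theorem IsCycle.verts_eq_dropLast_append {w : QWalk V E} (hw : w.IsCycle) :
    w.verts = w.verts.dropLast ++ [w.first] := by
  rw [hw]
  exact (List.dropLast_append_getLast _).symm

/-- The cycles `s₁, …, sₖ` of the factorization: `sⱼ` lies in `G ∖ {μ₁, …, μⱼ₋₁}`, where `μᵢ` is the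
base vertex of `sᵢ`. -/
def IsCycleSeq (ss : List (QWalk V E)) : Prop :=
  (∀ s ∈ ss, s.IsCycle) ∧ ss.Pairwise fun a b => a.first ∉ b.verts

theorem isCycleSeq_cons {s : QWalk V E} {ss : List (QWalk V E)} :
    IsCycleSeq (s :: ss) ↔ s.IsCycle ∧ (∀ t ∈ ss, s.first ∉ t.verts) ∧ IsCycleSeq ss := by
  simp only [IsCycleSeq, List.forall_mem_cons, List.pairwise_cons]
  tauto

theorem isCycleSeq_append_singleton {ss : List (QWalk V E)} {s : QWalk V E} :
    IsCycleSeq (ss ++ [s]) ↔ IsCycleSeq ss ∧ s.IsCycle ∧ ∀ a ∈ ss, a.first ∉ s.verts := by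
  simp only [IsCycleSeq, List.forall_mem_append,
    List.pairwise_append, List.pairwise_singleton, List.mem_singleton, forall_eq, true_and]
  tauto

theorem IsCycleSeq.eq_of_flatten_eq {ss ss' : List (QWalk V E)} (h : IsCycleSeq ss)
    (h' : IsCycleSeq ss') (heq : (ss.map verts).flatten = (ss'.map verts).flatten) :
    ss = ss' := by
  induction ss generalizing ss' with
  | nil =>
    cases ss' with
    | nil => rfl
    | cons s' ss' => simp [s'.ne] at heq
  | cons s ss ih =>
    cases ss' with
    | nil => simp [s.ne] at heq
    | cons s' ss' =>
      obtain ⟨hs, hsss, hss⟩ := isCycleSeq_cons.1 h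
      obtain ⟨hs', hsss', hss'⟩ := isCycleSeq_cons.1 h'
      have hfirst : s.first = s'.first := by
        have := congrArg List.head? heq
        rwa [List.map_cons, List.map_cons, List.flatten_cons, List.flatten_cons,
          verts_eq_first_cons s, verts_eq_first_cons s', List.cons_append, List.cons_append,
          List.head?_cons, List.head?_cons, Option.some_inj] at this
      rw [List.map_cons, List.map_cons, List.flatten_cons, List.flatten_cons,
        hs.verts_eq_dropLast_append, hs'.verts_eq_dropLast_append, ← hfirst,
        List.append_assoc, List.append_assoc, List.singleton_append,
        List.singleton_append] at heq
      obtain ⟨hdrop, hrest⟩ := List.eq_and_eq_of_append_cons_eq_of_notMem_right heq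
        (by simpa using hsss) (by simpa [hfirst] using hsss')
      have hss_eq : s = s' := verts_injective <| by
        rw [hs.verts_eq_dropLast_append, hs'.verts_eq_dropLast_append, hdrop, hfirst]
      rw [hss_eq, ih hss hss' hrest]

theorem exists_isCycleSeq_flatten_eq (L : List V) (hL : L.IsChain E) :
    ∃ ss : List (QWalk V E), IsCycleSeq ss ∧ (ss.map verts).flatten = L := by
  induction hn : L.length using Nat.strong_induction_on generalizing L with
  | _ n ih =>
  cases L with
  | nil => exact ⟨[], by simp [IsCycleSeq]⟩
  | cons x L₀ =>
    obtain ⟨D, C, hDC, hxC⟩ :=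
      List.exists_eq_append_cons_notMem_right (List.mem_cons_self (a := x) (l := L₀))
    have hB : (D ++ [x]).IsChain E := hL.prefix ⟨C, by simp [hDC]⟩
    obtain ⟨ss, hss, hflat⟩ := ih C.length (by simp [← hn, hDC]; omega) C
      (hL.suffix ⟨D ++ [x], by simp [hDC]⟩) rfl
    let s : QWalk V E := ⟨D ++ [x], by simp, hB⟩
    have hsfirst : s.first = x := by
      cases D with
      | nil => rfl
      | cons d D =>
        simp only [List.cons_append, List.cons.injEq] at hDC
        simp [s, first, hDC.1]
    have hs : s.IsCycle := by simp [IsCycle, hsfirst, s, last]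
    refine ⟨s :: ss, isCycleSeq_cons.2 ⟨hs, fun t ht hxt => ?_, hss⟩, ?_⟩
    · exact hxC (hflat ▸ List.mem_flatten.2 ⟨t.verts, List.mem_map_of_mem ht, hsfirst ▸ hxt⟩)
    · simp [hflat, hDC, s]

/-- Each cycle ends at its base vertex, and the next vertex of the walk is the base vertex of the
next cycle. -/
theorem isChain_cons_map_first (a : V) (T : List V) {ss : List (QWalk V E)}
    (hss : ∀ s ∈ ss, s.IsCycle) (h : (a :: ((ss.map verts).flatten ++ T)).IsChain E) :
    (a :: (ss.map first ++ T)).IsChain E := by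
  induction ss generalizing a with
  | nil => simpa using h
  | cons s ss ih =>
    have hs := hss s List.mem_cons_self
    rw [List.map_cons, List.flatten_cons, List.append_assoc] at h
    have hedge : E a s.first := by
      rw [verts_eq_first_cons s, List.cons_append] at h
      exact (List.isChain_cons_cons.1 h).1
    have hrest : (s.first :: ((ss.map verts).flatten ++ T)).IsChain E := by
      refine h.suffix ⟨a :: s.verts.dropLast, ?_⟩
      conv_rhs => rw [hs.verts_eq_dropLast_append]
      simp
    exact List.isChain_cons_cons.2 ⟨hedge, ih s.first (fun t ht => hss t (by simp [ht])) hrest⟩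

theorem exists_verts_eq_splice {u s : QWalk V E} {A T : List V}
    (hu : u.verts = A ++ s.first :: T) (hs : s.IsCycle) :
    ∃ w : QWalk V E, w.verts = A ++ s.verts ++ T := by
  have hchain := u.chain
  rw [hu] at hchain
  have hA : (A ++ s.verts).IsChain E := by
    rw [verts_eq_first_cons s, ← List.singleton_append, ← List.append_assoc]
    exact (hchain.prefix ⟨T, by simp⟩).append_overlap
      (by rw [List.singleton_append, ← verts_eq_first_cons]; exact s.chain) (by simp)
  have hsT : (A ++ s.verts.dropLast ++ [s.first] ++ T).IsChain E := by
    refine List.IsChain.append_overlap ?_ (hchain.suffix ⟨A, by simp⟩) (by simp)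
    rwa [List.append_assoc, ← hs.verts_eq_dropLast_append]
  refine ⟨⟨A ++ s.verts ++ T, by simp [s.ne], ?_⟩, rfl⟩
  rwa [List.append_assoc A, ← hs.verts_eq_dropLast_append] at hsT

theorem isNestE_iff {u s w : QWalk V E} {A T : List V} (hu : u.verts = A ++ s.first :: T)
    (hs : s.IsCycle) (hA : ∀ v ∈ A, v ∉ s.verts) (hT : s.first ∉ T) (hT₀ : T ≠ []) :
    IsNestE u s w ↔ w.verts = A ++ s.verts ++ T := by
  constructor
  · rintro (⟨β, A₁, A₂, rfl, -, hsplit, hβ, -, hw⟩ | ⟨htriv, -⟩)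
    · obtain ⟨rfl, rfl⟩ :=
        List.eq_and_eq_of_append_cons_eq_of_notMem_right (hu.symm.trans hsplit) hT hβ
      exact hw
    · simp only [Trivial, len, hu, List.length_append, List.length_cons] at htriv
      exact absurd (List.eq_nil_of_length_eq_zero (by omega)) hT₀
  · intro hw
    exact Or.inl ⟨s.first, A, T, rfl, hs.symm, hu, hT, Or.inr fun v hv _ => hA v hv, hw⟩

theorem lNestE_cons_iff {u b w : QWalk V E} {l : List (QWalk V E)} :
    LNestE u (b :: l) w ↔ ∃ u₁, IsNestE u b u₁ ∧ LNestE u₁ l w :=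
  ⟨fun | .cons h₁ h₂ => ⟨_, h₁, h₂⟩, fun ⟨_, h₁, h₂⟩ => .cons h₁ h₂⟩

theorem lNestE_nil_iff {u w : QWalk V E} : LNestE u [] w ↔ w = u :=
  ⟨fun | .nil _ => rfl, fun h => h ▸ .nil u⟩

theorem lNestE_reverse_iff (P : List V) {ss : List (QWalk V E)} (hss : IsCycleSeq ss)
    (hP : ∀ s ∈ ss, ∀ v ∈ P, v ∉ s.verts) {T : List V} (hT : ∀ s ∈ ss, s.first ∉ T)
    (hT₀ : T ≠ []) {u w : QWalk V E} (hu : u.verts = P ++ (ss.map first ++ T)) :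
    LNestE u ss.reverse w ↔ w.verts = P ++ ((ss.map verts).flatten ++ T) := by
  induction ss using List.reverseRecOn generalizing T u with
  | nil =>
    simp only [List.reverse_nil, lNestE_nil_iff, List.map_nil, List.flatten_nil,
      List.nil_append] at hu ⊢
    rw [← hu]
    exact ⟨congrArg verts, fun h => verts_injective h⟩
  | append_singleton ss s ih =>
    obtain ⟨hss, hs, hfirst⟩ := isCycleSeq_append_singleton.1 hss
    have hs_avoid : ∀ v ∈ P ++ ss.map first, v ∉ s.verts := by
      simp only [List.mem_append, List.mem_map]
      rintro v (hv | ⟨a, ha, rfl⟩)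
      exacts [hP s (by simp) v hv, hfirst a ha]
    have hu' : u.verts = (P ++ ss.map first) ++ s.first :: T := by simp [hu]
    have ih' (u₁ : QWalk V E) := ih hss (fun a ha => hP a (by simp [ha])) (T := s.verts ++ T)
      (by simpa [not_or] using fun a ha => ⟨hfirst a ha, hT a (by simp [ha])⟩)
      (by simp [s.ne]) (u := u₁)
    rw [List.reverse_append, List.reverse_singleton, List.singleton_append, lNestE_cons_iff]
    simp_rw [isNestE_iff hu' hs hs_avoid (hT s (by simp)) hT₀]
    constructor
    · rintro ⟨u₁, hu₁, hw⟩
      simpa using (ih' u₁ (by simpa using hu₁)).1 hw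
    · intro hw
      obtain ⟨u₁, hu₁⟩ := exists_verts_eq_splice hu' hs
      exact ⟨u₁, hu₁, (ih' u₁ (by simpa using hu₁)).2 (by simpa using hw)⟩

theorem verts_eq_cons_map_first_append {μ : V} {γ : QWalk V E} {ss : List (QWalk V E)}
    (hfirst : γ.first = μ) (hcyc : γ.IsCycle) (hnt : ¬γ.Trivial)
    (hlen : ss.length = γ.verts.length - 2)
    (hbase : ∀ (j : ℕ) (s : QWalk V E) (ν : V), ss[j]? = some s → γ.verts[j + 1]? = some ν →
      s.first = ν) :
    γ.verts = μ :: (ss.map first ++ [μ]) := by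
  have hlast : γ.verts.getLast γ.ne = μ := hcyc.symm.trans hfirst
  have hlen' : γ.verts.length = ss.length + 2 := by
    simp only [Trivial, len] at hnt
    omega
  apply List.ext_getElem (by simp [hlen'])
  intro i hi _
  match i with
  | 0 => simpa [first, List.head_eq_getElem] using hfirst
  | j + 1 =>
    rw [List.getElem_cons_succ]
    by_cases hj : j < ss.length
    · rw [List.getElem_append_left (by simpa using hj), List.getElem_map]
      exact (hbase j ss[j] _ (List.getElem?_eq_getElem hj) (List.getElem?_eq_getElem hi)).symm
    · have hj' : j = ss.length := by omega
      subst hj'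
      rw [List.getElem_append_right (by simp)]
      simpa [List.getLast_eq_getElem, hlen'] using hlast

theorem forall_getElem?_iff_isCycleSeq {μ : V} {ss : List (QWalk V E)} :
    (∀ (j : ℕ) (s : QWalk V E) (ν : V), ss[j]? = some s →
      (μ :: (ss.map first ++ [μ]))[j + 1]? = some ν →
        s.IsCycleOff ν ∧ ∀ v ∈ s.verts, v ∉ (μ :: (ss.map first ++ [μ])).take (j + 1)) ↔
    IsCycleSeq ss ∧ ∀ s ∈ ss, μ ∉ s.verts := by
  have htake (j : ℕ) (hj : j < ss.length) :
      (μ :: (ss.map first ++ [μ])).take (j + 1) = μ :: (ss.take j).map first := by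
    rw [List.take_succ_cons, List.take_append_of_le_length (by simp; omega), List.map_take]
  have hget (j : ℕ) (hj : j < ss.length) :
      (μ :: (ss.map first ++ [μ]))[j + 1]? = some ss[j].first := by
    rw [List.getElem?_cons_succ, List.getElem?_append_left (by simpa using hj)]
    simp [hj]
  trans ∀ (j : ℕ) (hj : j < ss.length), ss[j].IsCycle ∧ μ ∉ ss[j].verts ∧
    ∀ (i : ℕ) (hij : i < j), ss[i].first ∉ ss[j].verts
  · constructor
    · intro h j hj
      obtain ⟨⟨hcyc, -⟩, havoid⟩ := h j ss[j] _ (List.getElem?_eq_getElem hj) (hget j hj)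
      simp only [htake j hj, List.mem_cons, List.mem_map, List.mem_take_iff_getElem] at havoid
      exact ⟨hcyc, fun hμ => havoid μ hμ (.inl rfl),
        fun i hij hi => havoid _ hi (.inr ⟨ss[i], ⟨i, by omega, rfl⟩, rfl⟩)⟩
    · intro h j s ν hs hν
      obtain ⟨hj, rfl⟩ := List.getElem?_eq_some_iff.1 hs
      obtain ⟨hcyc, hμ, hbase⟩ := h j hj
      rw [hget j hj, Option.some_inj] at hν
      refine ⟨⟨hcyc, hν⟩, fun v hv => ?_⟩
      simp only [htake j hj, List.mem_cons, List.mem_map, List.mem_take_iff_getElem]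
      rintro (rfl | ⟨_, ⟨i, hij, rfl⟩, rfl⟩)
      exacts [hμ hv, hbase i (by omega) hv]
  · simp only [IsCycleSeq, List.pairwise_iff_getElem, List.forall_mem_iff_getElem]
    exact ⟨fun h => ⟨⟨fun j hj => (h j hj).1, fun i j _ hj hij => (h j hj).2.2 i hij⟩,
        fun j hj => (h j hj).2.1⟩,
      fun ⟨⟨hcyc, hpair⟩, hμ⟩ j hj => ⟨hcyc j hj, hμ j hj, fun i hij => hpair i j _ hj hij⟩⟩

theorem IsCycleOff.verts_eq_cons_append {μ : V} {c : QWalk V E} (hc : c.IsCycleOff μ)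
    (hnt : ¬c.Trivial) : c.verts = μ :: (c.verts.tail.dropLast ++ [μ]) := by
  have htail : c.verts.tail ≠ [] := by
    rw [Ne, ← List.length_eq_zero_iff, List.length_tail]
    exact hnt
  have hlast : c.verts.tail.getLast htail = μ := by
    rw [List.getLast_tail]
    exact hc.1.symm.trans hc.2
  calc c.verts = c.first :: c.verts.tail := verts_eq_first_cons c
    _ = μ :: (c.verts.tail.dropLast ++ [c.verts.tail.getLast htail]) := by
      rw [hc.2, List.dropLast_append_getLast]
    _ = μ :: (c.verts.tail.dropLast ++ [μ]) := by rw [hlast]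

theorem isSimpleCycle_of_verts_eq {μ : V} {γ : QWalk V E} {ss : List (QWalk V E)}
    (hγ : γ.verts = μ :: (ss.map first ++ [μ])) (hss : IsCycleSeq ss)
    (hμ : ∀ s ∈ ss, μ ∉ s.verts) : γ.IsSimpleCycle := by
  refine ⟨by simp [IsCycle, first, last, hγ], ?_⟩
  rw [hγ, List.tail_cons, List.nodup_append, List.Nodup, List.pairwise_map]
  refine ⟨hss.2.imp fun {a b} hab (h : a.first = b.first) => hab (h ▸ b.first_mem_verts),
    List.nodup_singleton μ, ?_⟩
  simp only [List.mem_map, List.mem_singleton]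
  rintro _ ⟨s, hs, rfl⟩ _ rfl hsμ
  exact hμ s hs (hsμ ▸ s.first_mem_verts)

/-- `ss = [s₁, …, s_{m-1}]` and `c = ((γ ⊙ s_{m-1}) ⊙ ⋯) ⊙ s₁`, as in the paper. -/
def IsNestingFactorization (μ : V) (c γ : QWalk V E) (ss : List (QWalk V E)) : Prop :=
  γ.IsSimpleCycle ∧ γ.first = μ ∧ ¬ γ.Trivial ∧
    ss.length = γ.verts.length - 2 ∧
    (∀ (j : ℕ) (s : QWalk V E) (ν : V),
      ss[j]? = some s → γ.verts[j + 1]? = some ν →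
        s.IsCycleOff ν ∧ ∀ v ∈ s.verts, v ∉ γ.verts.take (j + 1)) ∧
    LNestE γ ss.reverse c

theorem isNestingFactorization_iff {μ : V} {c γ : QWalk V E} {ss : List (QWalk V E)}
    {L : List V} (hc : c.verts = μ :: (L ++ [μ])) (hμ : μ ∉ L) :
    IsNestingFactorization μ c γ ss ↔
      γ.verts = μ :: (ss.map first ++ [μ]) ∧ IsCycleSeq ss ∧ (ss.map verts).flatten = L := by
  have hnest (hss : IsCycleSeq ss) (hμss : ∀ s ∈ ss, μ ∉ s.verts)
      (hγ : γ.verts = μ :: (ss.map first ++ [μ])) :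
      LNestE γ ss.reverse c ↔ (ss.map verts).flatten = L := by
    rw [lNestE_reverse_iff [μ] hss (by simpa using hμss)
      (fun s hs h => hμss s hs (by rw [← List.mem_singleton.1 h]; exact s.first_mem_verts))
      (by simp) hγ, hc]
    simp [eq_comm]
  constructor
  · rintro ⟨hsimple, hfirst, hnt, hlen, hidx, hLN⟩
    have hγ := verts_eq_cons_map_first_append hfirst hsimple.1 hnt hlen
      fun j s ν hs hν => (hidx j s ν hs hν).1.2
    rw [hγ] at hidx
    obtain ⟨hss, hμss⟩ := forall_getElem?_iff_isCycleSeq.1 hidx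
    exact ⟨hγ, hss, (hnest hss hμss hγ).1 hLN⟩
  · rintro ⟨hγ, hss, hflat⟩
    have hμss : ∀ s ∈ ss, μ ∉ s.verts := fun s hs hμs =>
      hμ (hflat ▸ List.mem_flatten.2 ⟨s.verts, List.mem_map_of_mem hs, hμs⟩)
    refine ⟨isSimpleCycle_of_verts_eq hγ hss hμss, by simp [first, hγ],
      by simp [Trivial, len, hγ], by simp [hγ], ?_, (hnest hss hμss hγ).2 hflat⟩
    rw [hγ]
    exact forall_getElem?_iff_isCycleSeq.2 ⟨hss, hμss⟩

end QWalk

theorem stmt9_general {V : Type} (E : V → V → Prop) (μ : V)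
    (c : QWalk V E) (hc : c.IsCycleOff μ) (hnt : ¬ c.Trivial)
    (hint : μ ∉ c.verts.tail.dropLast) :
    ∃! gss : QWalk V E × List (QWalk V E),
      gss.1.IsSimpleCycle ∧ gss.1.first = μ ∧ ¬ gss.1.Trivial ∧
      gss.2.length = gss.1.verts.length - 2 ∧
      (∀ (j : ℕ) (s : QWalk V E) (ν : V),
        gss.2[j]? = some s → gss.1.verts[j + 1]? = some ν →
          s.IsCycleOff ν ∧ ∀ v ∈ s.verts, v ∉ gss.1.verts.take (j + 1)) ∧
      QWalk.LNestE gss.1 gss.2.reverse c := by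
  have hcv := hc.verts_eq_cons_append hnt
  obtain ⟨ss, hss, hflat⟩ := QWalk.exists_isCycleSeq_flatten_eq c.verts.tail.dropLast
    (c.chain.infix ⟨[μ], [μ], by rw [List.singleton_append, List.cons_append]; exact hcv.symm⟩)
  have hγ : (μ :: (ss.map QWalk.first ++ [μ])).IsChain E :=
    QWalk.isChain_cons_map_first μ [μ] hss.1 (by rw [hflat, ← hcv]; exact c.chain)
  refine ⟨(⟨_, List.cons_ne_nil _ _, hγ⟩, ss),
    (QWalk.isNestingFactorization_iff hcv hint).2 ⟨rfl, hss, hflat⟩, ?_⟩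
  rintro ⟨γ', ss'⟩ h'
  obtain ⟨hγ', hss', hflat'⟩ := (QWalk.isNestingFactorization_iff hcv hint).1 h'
  obtain rfl : ss' = ss := hss'.eq_of_flatten_eq hss (hflat'.trans hflat.symm)
  exact Prod.ext (QWalk.verts_injective hγ') rfl

/-- Every nontrivial cycle `c` off `μ` without `μ` as internal vertex
factorizes as `c = ((γ ⊙ s_{m-1}) ⊙ ⋯) ⊙ s_1` for a *unique* nontrivial simple cycle
`γ = (μ μ₁ ⋯ μ_{m-1} μ)` off `μ` and *unique* (possibly trivial) cycles `s_i` off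
`μ_i` lying entirely in the deleted subquiver `G ∖ {μ, μ₁, …, μ_{i-1}}`. -/
theorem stmt9 {V : Type} [Fintype V] (E : V → V → Prop) (μ : V)
    (c : QWalk V E) (hc : c.IsCycleOff μ) (hnt : ¬ c.Trivial)
    (hint : μ ∉ c.verts.tail.dropLast) :
    ∃! gss : QWalk V E × List (QWalk V E),
      gss.1.IsSimpleCycle ∧ gss.1.first = μ ∧ ¬ gss.1.Trivial ∧
      gss.2.length = gss.1.verts.length - 2 ∧
      (∀ (j : ℕ) (s : QWalk V E) (ν : V),
        gss.2[j]? = some s → gss.1.verts[j + 1]? = some ν →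
          s.IsCycleOff ν ∧ ∀ v ∈ s.verts, v ∉ gss.1.verts.take (j + 1)) ∧
      QWalk.LNestE gss.1 gss.2.reverse c :=
  stmt9_general E μ c hc hnt hint
end

section
/- Weighted path-sum with noncommuting matrix weights: let G be a finite quiver with vertex set V, to each vertex ν attach a dimension d(ν) ≥ 1, and to each edge (μ, ν) ∈ E(G) attach a weight matrix w_{νμ} of size d(ν) × d(μ) over ℂ. Let M(z) be the block matrix over ℂ[[z]], indexed by V, whose (ν, μ) block is z·w_{νμ} if (μ, ν) ∈ E(G) and 0 otherwise. Then Id − M(z) is invertible over ℂ[[z]], and for all α, ω ∈ V the (ω, α) block of (Id − M(z))⁻¹ equals Σ_π z^p · F_{V∖{σ0,…,σ(p−1)}}(σp) · w_{σp σ(p−1)} · F_{V∖{σ0,…,σ(p−2)}}(σ(p−1)) ⋯ w_{σ1 σ0} · F_V(σ0), the sum running over all simple paths π = (σ0 σ1 ⋯ σp) of G with σ0 = α and σp = ω (for α = ω the only such π is the trivial path and the summand is F_V(α)). -/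
/-!
Eliminate the vertices one at a time (block Gaussian elimination). Write `P_T` for the
projection onto the blocks of `T` and `R_S` for the sum of the path terms of the simple paths
inside `S`; then `P_S (1 - M) P_S R_S = P_S` by strong induction on `S`. For `α ∈ S` and
`S' = S ∖ {α}`, splitting a path that starts at `α` after its first vertex gives
`R_S P_α = F + R_{S'} W F` with `W = P_{S'} M P_α` and `F = F_S(α)`, and splitting a simple cycle
at `α` gives `Σ_γ = P_α M P_α + P_α M R_{S'} W`. Since `F` inverts `1 - Σ_γ` on the `α`
block, the `α`-column of the identity is the Schur-complement formula for the inverse of a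
`2 × 2` block matrix.
-/

noncomputable section

variable {V : Type}

/-- The total index space of the block structure: one block `Fin (d v)` per vertex. -/
abbrev BIdx (d : V → ℕ) : Type := Σ v : V, Fin (d v)

/-- The global (block-supported) matrix over `ℂ[[z]]` whose `(ν, μ)` block is the
constant matrix `w_{νμ}` and whose other blocks vanish. -/
def embW [DecidableEq V] (d : V → ℕ)
    (wt : ∀ ν μ : V, Matrix (Fin (d ν)) (Fin (d μ)) ℂ) (ν μ : V) :
    Matrix (BIdx d) (BIdx d) (PowerSeries ℂ) :=
  Matrix.of fun p q =>
    if p.1 = ν ∧ q.1 = μ then (PowerSeries.C : ℂ →+* PowerSeries ℂ) (wt p.1 q.1 p.2 q.2) else 0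

/-- The global matrix which is the identity on the `(α, α)` block and zero elsewhere. -/
def blockId [Fintype V] [DecidableEq V] (d : V → ℕ) (α : V) :
    Matrix (BIdx d) (BIdx d) (PowerSeries ℂ) :=
  Matrix.of fun p q =>
    if p.1 = α then (1 : Matrix (BIdx d) (BIdx d) (PowerSeries ℂ)) p q else 0

/-- Given a family `F` of dressed-vertex matrices, the (globally embedded) product
`w_{α μ_m} · F_{T∖{μ₂,…,μ_{m-1}}}(μ_m) · w_{μ_m μ_{m-1}} ⋯ F_T(μ₂) · w_{μ₂ α}`
attached to the simple cycle `(α μ₂ ⋯ μ_m α)` with internal vertex list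
`c = [μ₂, …, μ_m]` (here `T = S ∖ {α}`); for `c = []` it is the loop weight `w_{αα}`. -/
def cycG [Fintype V] [DecidableEq V] (d : V → ℕ)
    (wt : ∀ ν μ : V, Matrix (Fin (d ν)) (Fin (d μ)) ℂ)
    (F : Finset V → V → Matrix (BIdx d) (BIdx d) (PowerSeries ℂ)) (α : V) :
    Finset V → V → List V → Matrix (BIdx d) (BIdx d) (PowerSeries ℂ)
  | _, prev, [] => embW d wt α prev
  | T, prev, v :: r => cycG d wt F α (T.erase v) v r * F T v * embW d wt v prev

/-- Fuel-graded, globally embedded dressed-vertex matrix `F_S(α)`: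
`F_S(α) = (Id − Σ_γ z^m · w_{α μ_m} · F_{S∖{α,μ₂,…,μ_{m-1}}}(μ_m) ⋯ F_{S∖{α}}(μ₂) · w_{μ₂ α})⁻¹`,
the sum running over all nontrivial simple cycles `γ = (α μ₂ ⋯ μ_m α)` of the induced
subquiver `G[S]`, recorded by their internal vertex lists.  The matrix is embedded as
the `(α, α)` block of a global matrix (the summed matrix is supported on that block,
so the formula below performs exactly the block inversion). -/
def FMgAux [Fintype V] [DecidableEq V] (E : V → V → Prop) (d : V → ℕ)
    (wt : ∀ ν μ : V, Matrix (Fin (d ν)) (Fin (d μ)) ℂ) :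
    ℕ → Finset V → V → Matrix (BIdx d) (BIdx d) (PowerSeries ℂ)
  | 0, _, _ => 0
  | n + 1, S, α =>
      (1 - ∑ᶠ c ∈ {c : List V | c.Nodup ∧ α ∉ c ∧ (∀ v ∈ c, v ∈ S) ∧
            List.Chain E α (c ++ [α])},
          (PowerSeries.X : PowerSeries ℂ) ^ (c.length + 1) •
            cycG d wt (FMgAux E d wt n) α (S.erase α) α c)⁻¹
        + blockId d α - 1

/-- The globally embedded dressed-vertex matrix `F_S(α)`. -/
def FMg [Fintype V] [DecidableEq V] (E : V → V → Prop) (d : V → ℕ)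
    (wt : ∀ ν μ : V, Matrix (Fin (d ν)) (Fin (d μ)) ℂ)
    (S : Finset V) (α : V) : Matrix (BIdx d) (BIdx d) (PowerSeries ℂ) :=
  FMgAux E d wt S.card S α

/-- The globally embedded product
`F_{V∖{σ₀,…,σ_{p-1}}}(σ_p) · w_{σ_p σ_{p-1}} ⋯ w_{σ₁ σ₀} · F_V(σ₀)` attached to a
simple path `(σ₀ σ₁ ⋯ σ_p)`; `pathG T prev r` treats the remaining vertices `r`
after the current vertex `prev`, the vertices before `prev` having been deleted
from `T`. -/
def pathG [Fintype V] [DecidableEq V] (E : V → V → Prop) (d : V → ℕ)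
    (wt : ∀ ν μ : V, Matrix (Fin (d ν)) (Fin (d μ)) ℂ) :
    Finset V → V → List V → Matrix (BIdx d) (BIdx d) (PowerSeries ℂ)
  | T, prev, [] => FMg E d wt T prev
  | T, prev, v :: r =>
      pathG E d wt (T.erase prev) v r * embW d wt v prev * FMg E d wt T prev

/-- The summand attached to a simple path recorded by its full vertex sequence:
`z^p` times the alternating product of dressed-vertex matrices and edge weights. -/
def pathTerm [Fintype V] [DecidableEq V] (E : V → V → Prop) (d : V → ℕ)
    (wt : ∀ ν μ : V, Matrix (Fin (d ν)) (Fin (d μ)) ℂ) :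
    List V → Matrix (BIdx d) (BIdx d) (PowerSeries ℂ)
  | [] => 0
  | v :: r => (PowerSeries.X : PowerSeries ℂ) ^ r.length • pathG E d wt Finset.univ v r

open Classical in
/-- The block matrix `M(z)` over `ℂ[[z]]` whose `(ν, μ)` block is `z · w_{νμ}` when
`(μ, ν)` is an edge and `0` otherwise. -/
def Mz (E : V → V → Prop) (d : V → ℕ)
    (wt : ∀ ν μ : V, Matrix (Fin (d ν)) (Fin (d μ)) ℂ) :
    Matrix (BIdx d) (BIdx d) (PowerSeries ℂ) :=
  Matrix.of fun p q =>
    if E q.1 p.1 then PowerSeries.X * (PowerSeries.C : ℂ →+* PowerSeries ℂ) (wt p.1 q.1 p.2 q.2) else 0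

open PowerSeries

section BlockProjection

variable [DecidableEq V] {ι : V → Type*} [∀ v, DecidableEq (ι v)] {R : Type*} [Semiring R]

def blockProj (T : Finset V) : Matrix (Σ v, ι v) (Σ v, ι v) R :=
  Matrix.diagonal fun p => if p.1 ∈ T then 1 else 0

lemma blockProj_univ [Fintype V] :
    (blockProj Finset.univ : Matrix (Σ v, ι v) (Σ v, ι v) R) = 1 := by
  simp [blockProj]

lemma sum_blockProj_singleton (S : Finset V) :
    ∑ α ∈ S, (blockProj {α} : Matrix (Σ v, ι v) (Σ v, ι v) R) = blockProj S := by
  ext p q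
  simp [blockProj, Matrix.sum_apply, Matrix.diagonal_apply]

lemma blockProj_eq_singleton_add_erase {S : Finset V} {α : V} (hα : α ∈ S) :
    (blockProj S : Matrix (Σ v, ι v) (Σ v, ι v) R) =
      blockProj {α} + blockProj (S.erase α) := by
  rw [← sum_blockProj_singleton, ← Finset.add_sum_erase S _ hα, sum_blockProj_singleton]

variable [Fintype V] [∀ v, Fintype (ι v)]

lemma blockProj_mul_apply (T : Finset V) (M : Matrix (Σ v, ι v) (Σ v, ι v) R) (p q) :
    (blockProj T * M : Matrix (Σ v, ι v) (Σ v, ι v) R) p q =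
      if p.1 ∈ T then M p q else 0 := by
  simp [blockProj, Matrix.diagonal_mul]

lemma mul_blockProj_apply (T : Finset V) (M : Matrix (Σ v, ι v) (Σ v, ι v) R) (p q) :
    (M * blockProj T : Matrix (Σ v, ι v) (Σ v, ι v) R) p q =
      if q.1 ∈ T then M p q else 0 := by
  simp [blockProj, Matrix.mul_diagonal]

lemma blockProj_mul_blockProj (T U : Finset V) :
    (blockProj T * blockProj U : Matrix (Σ v, ι v) (Σ v, ι v) R) = blockProj (T ∩ U) := by
  simp only [blockProj, Matrix.diagonal_mul_diagonal, Finset.mem_inter, ite_zero_mul_ite_zero,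
    mul_one]

lemma isIdempotentElem_blockProj (T : Finset V) :
    IsIdempotentElem (blockProj T : Matrix (Σ v, ι v) (Σ v, ι v) R) := by
  rw [IsIdempotentElem, blockProj_mul_blockProj, Finset.inter_self]

lemma blockProj_mul_blockProj_of_disjoint {T U : Finset V} (h : Disjoint T U) :
    (blockProj T * blockProj U : Matrix (Σ v, ι v) (Σ v, ι v) R) = 0 := by
  rw [blockProj_mul_blockProj, Finset.disjoint_iff_inter_eq_empty.mp h]
  simp [blockProj]

variable {M N : Matrix (Σ v, ι v) (Σ v, ι v) R} {T U : Finset V}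

lemma blockProj_mul_of_subset (hM : blockProj T * M = M) (h : T ⊆ U) : blockProj U * M = M := by
  rw [← hM, ← mul_assoc, blockProj_mul_blockProj, Finset.inter_eq_right.mpr h]

lemma mul_blockProj_of_subset (hM : M * blockProj T = M) (h : T ⊆ U) : M * blockProj U = M := by
  rw [← hM, mul_assoc, blockProj_mul_blockProj, Finset.inter_eq_left.mpr h]

lemma mul_eq_zero_of_disjoint (hM : M * blockProj T = M) (hN : blockProj U * N = N)
    (h : Disjoint T U) : M * N = 0 := by
  rw [← hM, ← hN, mul_assoc, ← mul_assoc (blockProj T), blockProj_mul_blockProj_of_disjoint h,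
    zero_mul, mul_zero]

end BlockProjection

/- If `u` inverts `1 - c` and `c` lies in the corner `p A p`, then `u + p - 1` lies in that
corner and inverts `p - c` there; this is the shape of the recursion defining `FMgAux`. -/
section CornerInverse

variable {A : Type*} [Ring A] {c p u : A}

lemma mul_add_sub_one_eq (hu : (1 - c) * u = 1) (hpc : p * c = c) (hp : IsIdempotentElem p) :
    p * (u + p - 1) = u + p - 1 := by
  have hcu : c * u = u - 1 := by rw [sub_mul, one_mul] at hu; rw [← hu]; abel
  have hpu : p * (u - 1) = u - 1 := by rw [← hcu, ← mul_assoc, hpc]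
  calc p * (u + p - 1) = p * (u - 1) + p * p := by noncomm_ring
    _ = u + p - 1 := by rw [hpu, hp.eq]; abel

lemma add_sub_one_mul_eq (hu : u * (1 - c) = 1) (hcp : c * p = c) (hp : IsIdempotentElem p) :
    (u + p - 1) * p = u + p - 1 := by
  have huc : u * c = u - 1 := by rw [mul_sub, mul_one] at hu; rw [← hu]; abel
  have hup : (u - 1) * p = u - 1 := by rw [← huc, mul_assoc, hcp]
  calc (u + p - 1) * p = (u - 1) * p + p * p := by noncomm_ring
    _ = u + p - 1 := by rw [hup, hp.eq]; abel

lemma one_sub_mul_add_sub_one (hu : (1 - c) * u = 1) (hcp : c * p = c) :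
    (1 - c) * (u + p - 1) = p := by
  calc (1 - c) * (u + p - 1) = (1 - c) * u + (p - c * p) - (1 - c) := by noncomm_ring
    _ = p := by rw [hu, hcp]; abel

end CornerInverse

lemma isUnit_det_one_sub_X_smul {n R : Type*} [Fintype n] [DecidableEq n] [CommRing R]
    (A : Matrix n n R⟦X⟧) : IsUnit (1 - (X : R⟦X⟧) • A).det := by
  have h : (constantCoeff (R := R)).mapMatrix (1 - (X : R⟦X⟧) • A) = 1 := by
    ext i j
    simp [Matrix.one_apply]
  rw [isUnit_iff_constantCoeff, RingHom.map_det, h, Matrix.det_one]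
  exact isUnit_one

local notation "𝕄" d => Matrix (BIdx d) (BIdx d) ℂ⟦X⟧

section Blocks

variable [DecidableEq V] {E : V → V → Prop} {d : V → ℕ}
  {wt : ∀ ν μ : V, Matrix (Fin (d ν)) (Fin (d μ)) ℂ}

lemma blockId_eq_blockProj [Fintype V] (α : V) : blockId d α = blockProj {α} := by
  ext p q
  by_cases h : p = q <;> simp [blockId, blockProj, Matrix.one_apply, h]

variable [Fintype V]

lemma blockProj_mul_embW (ν μ : V) : blockProj {ν} * embW d wt ν μ = embW d wt ν μ := by
  ext p q
  rw [blockProj_mul_apply]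
  by_cases h : p.1 = ν <;> simp [embW, h]

lemma embW_mul_blockProj (ν μ : V) : embW d wt ν μ * blockProj {μ} = embW d wt ν μ := by
  ext p q
  rw [mul_blockProj_apply]
  by_cases h : q.1 = μ <;> simp [embW, h]

open Classical in
lemma blockProj_mul_Mz_mul_blockProj (a b : V) :
    blockProj {a} * Mz E d wt * blockProj {b} =
      if E b a then (X : ℂ⟦X⟧) • embW d wt a b else 0 := by
  ext p q
  rw [mul_blockProj_apply, blockProj_mul_apply]
  by_cases ha : p.1 = a <;> by_cases hb : q.1 = b <;> by_cases hE : E b a <;>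
    simp [Mz, embW, ha, hb, hE]

end Blocks

lemma List.finite_setOf_nodup_and {α : Type*} [Fintype α] (P : List α → Prop) :
    {L : List α | L.Nodup ∧ P L}.Finite :=
  (List.finite_length_le α (Fintype.card α)).subset fun _ hL => hL.1.length_le_card

section DressedVertices

variable [Fintype V] (E : V → V → Prop)

def simpleCycles (S : Finset V) (α : V) : Finset (List V) :=
  (List.finite_setOf_nodup_and fun c =>
    α ∉ c ∧ (∀ v ∈ c, v ∈ S) ∧ (α :: (c ++ [α])).IsChain E).toFinset

lemma mem_simpleCycles {S : Finset V} {α : V} {c : List V} :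
    c ∈ simpleCycles E S α ↔
      c.Nodup ∧ α ∉ c ∧ (∀ v ∈ c, v ∈ S) ∧ (α :: (c ++ [α])).IsChain E :=
  Set.Finite.mem_toFinset _

lemma nil_mem_simpleCycles_iff {S : Finset V} {α : V} :
    [] ∈ simpleCycles E S α ↔ E α α := by
  simp [mem_simpleCycles]

variable [DecidableEq V] (d : V → ℕ) (wt : ∀ ν μ : V, Matrix (Fin (d ν)) (Fin (d μ)) ℂ)

def cycleSum (F : Finset V → V → 𝕄 d) (S : Finset V) (α : V) : 𝕄 d :=
  ∑ c ∈ simpleCycles E S α,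
    (X : ℂ⟦X⟧) ^ (c.length + 1) • cycG d wt F α (S.erase α) α c

variable {E d wt} {S : Finset V} {α : V}

lemma FMgAux_succ (n : ℕ) (S : Finset V) (α : V) :
    FMgAux E d wt (n + 1) S α =
      (1 - cycleSum E d wt (FMgAux E d wt n) S α)⁻¹ + blockId d α - 1 := by
  rw [FMgAux, cycleSum, simpleCycles, ← finsum_mem_eq_finite_toFinset_sum]
  rfl

lemma blockProj_mul_cycG (F : Finset V → V → 𝕄 d) (α : V) :
    ∀ (c : List V) (T : Finset V) (prev : V),
      blockProj {α} * cycG d wt F α T prev c = cycG d wt F α T prev c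
  | [], _, prev => blockProj_mul_embW α prev
  | v :: r, T, _ => by rw [cycG, ← mul_assoc, ← mul_assoc, blockProj_mul_cycG F α r]

lemma cycG_mul_blockProj (F : Finset V → V → 𝕄 d) (α : V) :
    ∀ (c : List V) (T : Finset V) (prev : V),
      cycG d wt F α T prev c * blockProj {prev} = cycG d wt F α T prev c
  | [], _, prev => embW_mul_blockProj α prev
  | v :: r, T, prev => by rw [cycG, mul_assoc, embW_mul_blockProj]

lemma blockProj_mul_cycleSum (F : Finset V → V → 𝕄 d) :
    blockProj {α} * cycleSum E d wt F S α = cycleSum E d wt F S α := by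
  simp only [cycleSum, Finset.mul_sum, Matrix.mul_smul, blockProj_mul_cycG]

lemma cycleSum_mul_blockProj (F : Finset V → V → 𝕄 d) :
    cycleSum E d wt F S α * blockProj {α} = cycleSum E d wt F S α := by
  simp only [cycleSum, Finset.sum_mul, Matrix.smul_mul, cycG_mul_blockProj]

lemma isUnit_det_one_sub_cycleSum (F : Finset V → V → 𝕄 d) :
    IsUnit (1 - cycleSum E d wt F S α).det := by
  have h : cycleSum E d wt F S α = (X : ℂ⟦X⟧) •
      ∑ c ∈ simpleCycles E S α,
        (X : ℂ⟦X⟧) ^ c.length • cycG d wt F α (S.erase α) α c := by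
    simp only [cycleSum, Finset.smul_sum, smul_smul, pow_succ']
  rw [h]
  exact isUnit_det_one_sub_X_smul _

lemma blockProj_mul_FMgAux (n : ℕ) (S : Finset V) (α : V) :
    blockProj {α} * FMgAux E d wt n S α = FMgAux E d wt n S α := by
  cases n with
  | zero => simp [FMgAux]
  | succ n =>
    rw [FMgAux_succ, blockId_eq_blockProj]
    exact mul_add_sub_one_eq (Matrix.mul_nonsing_inv _ (isUnit_det_one_sub_cycleSum _))
      (blockProj_mul_cycleSum _) (isIdempotentElem_blockProj _)

lemma FMgAux_mul_blockProj (n : ℕ) (S : Finset V) (α : V) :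
    FMgAux E d wt n S α * blockProj {α} = FMgAux E d wt n S α := by
  cases n with
  | zero => simp [FMgAux]
  | succ n =>
    rw [FMgAux_succ, blockId_eq_blockProj]
    exact add_sub_one_mul_eq (Matrix.nonsing_inv_mul _ (isUnit_det_one_sub_cycleSum _))
      (cycleSum_mul_blockProj _) (isIdempotentElem_blockProj _)

lemma blockProj_mul_FMg (S : Finset V) (α : V) :
    blockProj {α} * FMg E d wt S α = FMg E d wt S α :=
  blockProj_mul_FMgAux _ S α

lemma FMg_mul_blockProj (S : Finset V) (α : V) :
    FMg E d wt S α * blockProj {α} = FMg E d wt S α :=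
  FMgAux_mul_blockProj _ S α

lemma cycG_congr {F F' : Finset V → V → 𝕄 d} (α : V) :
    ∀ (c : List V) (T : Finset V) (prev : V), c.Nodup → (∀ v ∈ c, v ∈ T) →
      (∀ T' ⊆ T, ∀ v ∈ T', F T' v = F' T' v) →
      cycG d wt F α T prev c = cycG d wt F' α T prev c
  | [], _, _, _, _, _ => rfl
  | v :: r, T, prev, hnd, hT, hF => by
    rw [List.nodup_cons] at hnd
    have hr : ∀ u ∈ r, u ∈ T.erase v := fun u hu =>
      Finset.mem_erase.mpr ⟨ne_of_mem_of_not_mem hu hnd.1, hT u (List.mem_cons_of_mem v hu)⟩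
    rw [cycG, cycG, hF T subset_rfl v (hT v List.mem_cons_self),
      cycG_congr α r _ v hnd.2 hr fun T' hT' => hF T' (hT'.trans (Finset.erase_subset v T))]

lemma cycleSum_congr {F F' : Finset V → V → 𝕄 d}
    (hF : ∀ T ⊆ S.erase α, ∀ v ∈ T, F T v = F' T v) :
    cycleSum E d wt F S α = cycleSum E d wt F' S α := by
  refine Finset.sum_congr rfl fun c hc => ?_
  obtain ⟨hnd, hαc, hcS, -⟩ := (mem_simpleCycles E).mp hc
  rw [cycG_congr α c _ α hnd (fun v hv =>
    Finset.mem_erase.mpr ⟨ne_of_mem_of_not_mem hv hαc, hcS v hv⟩) hF]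

lemma FMgAux_eq_FMg {n : ℕ} (hα : α ∈ S) (hn : S.card ≤ n) :
    FMgAux E d wt n S α = FMg E d wt S α := by
  induction n using Nat.strong_induction_on generalizing S α with
  | _ n ih =>
  obtain ⟨m, hm⟩ : ∃ m, S.card = m + 1 := ⟨S.card - 1, by grind [Finset.card_pos]⟩
  obtain ⟨k, rfl⟩ : ∃ k, n = k + 1 := ⟨n - 1, by omega⟩
  have hcard : (S.erase α).card = m := by rw [Finset.card_erase_of_mem hα, hm]; rfl
  rw [FMg, hm, FMgAux_succ, FMgAux_succ, cycleSum_congr fun T hT v hv => ?_]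
  have hT : T.card ≤ m := hcard ▸ Finset.card_le_card hT
  rw [ih k (by omega) hv (by omega), ih m (by omega) hv hT]

lemma FMg_eq (hα : α ∈ S) :
    FMg E d wt S α = (1 - cycleSum E d wt (FMg E d wt) S α)⁻¹ + blockId d α - 1 := by
  obtain ⟨m, hm⟩ : ∃ m, S.card = m + 1 := ⟨S.card - 1, by grind [Finset.card_pos]⟩
  have hcard : (S.erase α).card = m := by rw [Finset.card_erase_of_mem hα, hm]; rfl
  rw [FMg, hm, FMgAux_succ, cycleSum_congr fun T hT v hv =>
    FMgAux_eq_FMg hv (hcard ▸ Finset.card_le_card hT)]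

lemma one_sub_cycleSum_mul_FMg (hα : α ∈ S) :
    (1 - cycleSum E d wt (FMg E d wt) S α) * FMg E d wt S α = blockProj {α} := by
  rw [FMg_eq hα, blockId_eq_blockProj]
  exact one_sub_mul_add_sub_one (Matrix.mul_nonsing_inv _ (isUnit_det_one_sub_cycleSum _))
    (cycleSum_mul_blockProj _)

end DressedVertices

lemma List.isChain_cons_append_singleton_iff {α : Type*} {R : α → α → Prop} {a b : α}
    {L : List α} : (a :: (L ++ [b])).IsChain R ↔ (a :: L).IsChain R ∧ R (L.getLastD a) b := by
  induction L generalizing a with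
  | nil => simp
  | cons u L ih =>
    simp only [List.cons_append, List.isChain_cons_cons, ih, List.getLastD_cons, and_assoc]

section PathSums

variable [Fintype V] (E : V → V → Prop)

def simplePaths (S : Finset V) : Finset (List V) :=
  (List.finite_setOf_nodup_and fun L =>
    L ≠ [] ∧ (∀ v ∈ L, v ∈ S) ∧ L.IsChain E).toFinset

lemma mem_simplePaths {S : Finset V} {L : List V} :
    L ∈ simplePaths E S ↔ L.Nodup ∧ L ≠ [] ∧ (∀ v ∈ L, v ∈ S) ∧ L.IsChain E :=
  Set.Finite.mem_toFinset _

lemma exists_cons_of_mem_simplePaths {S : Finset V} {L : List V} (hL : L ∈ simplePaths E S) :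
    ∃ v r, L = v :: r :=
  List.exists_cons_of_ne_nil ((mem_simplePaths E).mp hL).2.1

variable [DecidableEq V] (d : V → ℕ) (wt : ∀ ν μ : V, Matrix (Fin (d ν)) (Fin (d μ)) ℂ)

def pathTermIn (S : Finset V) : List V → 𝕄 d
  | [] => 0
  | v :: r => (X : ℂ⟦X⟧) ^ r.length • pathG E d wt S v r

def pathSum (S : Finset V) : 𝕄 d :=
  ∑ L ∈ simplePaths E S, pathTermIn E d wt S L

variable {E d wt} {S : Finset V} {α : V}

lemma pathTermIn_univ : pathTermIn E d wt Finset.univ = pathTerm E d wt := by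
  funext L
  cases L <;> rfl

lemma pathTermIn_cons_cons (S : Finset V) (α v : V) (r : List V) :
    pathTermIn E d wt S (α :: v :: r) =
      (X : ℂ⟦X⟧) • (pathTermIn E d wt (S.erase α) (v :: r) * embW d wt v α) *
        FMg E d wt S α := by
  simp only [pathTermIn, pathG, List.length_cons, Matrix.smul_mul, smul_smul, pow_succ']

lemma pathG_mul_blockProj (T : Finset V) (prev : V) :
    ∀ r : List V, pathG E d wt T prev r * blockProj {prev} = pathG E d wt T prev r
  | [] => FMg_mul_blockProj T prev
  | _ :: _ => by rw [pathG, mul_assoc, FMg_mul_blockProj]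

lemma blockProj_mul_pathG :
    ∀ (r : List V) (T : Finset V) (prev : V),
      blockProj {r.getLastD prev} * pathG E d wt T prev r = pathG E d wt T prev r
  | [], T, prev => blockProj_mul_FMg T prev
  | v :: r, T, prev => by
    rw [pathG, List.getLastD_cons, ← mul_assoc, ← mul_assoc, blockProj_mul_pathG r]

lemma pathTermIn_cons_mul_blockProj (S : Finset V) (v : V) (r : List V) :
    pathTermIn E d wt S (v :: r) * blockProj {v} = pathTermIn E d wt S (v :: r) := by
  rw [pathTermIn, Matrix.smul_mul, pathG_mul_blockProj]

lemma blockProj_mul_pathTermIn_cons (S : Finset V) (v : V) (r : List V) :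
    blockProj {r.getLastD v} * pathTermIn E d wt S (v :: r) = pathTermIn E d wt S (v :: r) := by
  rw [pathTermIn, Matrix.mul_smul, blockProj_mul_pathG]

lemma pathSum_mul_blockProj (S : Finset V) :
    pathSum E d wt S * blockProj S = pathSum E d wt S := by
  rw [pathSum, Finset.sum_mul]
  refine Finset.sum_congr rfl fun L hL => ?_
  obtain ⟨-, hne, hLS, -⟩ := (mem_simplePaths E).mp hL
  obtain ⟨v, r, rfl⟩ := List.exists_cons_of_ne_nil hne
  exact mul_blockProj_of_subset (pathTermIn_cons_mul_blockProj S v r)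
    (Finset.singleton_subset_iff.mpr (hLS v List.mem_cons_self))

lemma blockProj_mul_pathSum (S : Finset V) :
    blockProj S * pathSum E d wt S = pathSum E d wt S := by
  rw [pathSum, Finset.mul_sum]
  refine Finset.sum_congr rfl fun L hL => ?_
  obtain ⟨-, hne, hLS, -⟩ := (mem_simplePaths E).mp hL
  obtain ⟨v, r, rfl⟩ := List.exists_cons_of_ne_nil hne
  exact blockProj_mul_of_subset (blockProj_mul_pathTermIn_cons S v r)
    (Finset.singleton_subset_iff.mpr (hLS _ List.getLastD_mem_cons))

lemma setOf_path_eq_filter_simplePaths (α ω : V) :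
    {L : List V | L.Nodup ∧ L.head? = some α ∧ L.getLast? = some ω ∧ L.IsChain E} =
      ↑((simplePaths E Finset.univ).filter fun L => L.head? = some α ∧ L.getLast? = some ω) := by
  ext L
  simp only [Set.mem_setOf, Finset.coe_filter, mem_simplePaths, Finset.mem_univ, implies_true,
    true_and]
  constructor
  · rintro ⟨hnd, hhead, hlast, hch⟩
    exact ⟨⟨hnd, by rintro rfl; simp at hhead, hch⟩, hhead, hlast⟩
  · rintro ⟨⟨hnd, -, hch⟩, hhead, hlast⟩
    exact ⟨hnd, hhead, hlast, hch⟩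

lemma pathSum_apply (S : Finset V) (α ω : V) (i : Fin (d ω)) (j : Fin (d α)) :
    pathSum E d wt S ⟨ω, i⟩ ⟨α, j⟩ =
      ∑ L ∈ (simplePaths E S).filter (fun L => L.head? = some α ∧ L.getLast? = some ω),
        pathTermIn E d wt S L ⟨ω, i⟩ ⟨α, j⟩ := by
  rw [pathSum, Matrix.sum_apply, Finset.sum_filter]
  refine Finset.sum_congr rfl fun L hL => ?_
  obtain ⟨v, r, rfl⟩ := exists_cons_of_mem_simplePaths E hL
  conv_lhs => rw [← blockProj_mul_pathTermIn_cons, ← pathTermIn_cons_mul_blockProj,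
    blockProj_mul_apply, mul_blockProj_apply]
  simp only [Finset.mem_singleton, List.head?_cons, List.getLast?_cons,
    ← List.getLastD_eq_getLast?, Option.some.injEq, ← ite_and]
  exact if_congr (and_comm.trans (and_congr eq_comm eq_comm)) rfl rfl

end PathSums

section Decomposition

variable [Fintype V] [DecidableEq V] {E : V → V → Prop} {d : V → ℕ}
  {wt : ∀ ν μ : V, Matrix (Fin (d ν)) (Fin (d μ)) ℂ} {S : Finset V} {α : V}

open Classical

lemma pathSum_mul_blockProj_mul_Mz_mul_blockProj (T : Finset V) (α : V) :
    pathSum E d wt T * (blockProj T * Mz E d wt * blockProj {α}) =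
      ∑ L ∈ (simplePaths E T).filter (fun L => (α :: L).IsChain E),
        (X : ℂ⟦X⟧) • (pathTermIn E d wt T L * embW d wt (L.headD α) α) := by
  rw [pathSum, Finset.sum_mul, Finset.sum_filter]
  refine Finset.sum_congr rfl fun L hL => ?_
  obtain ⟨-, hne, hLT, hch⟩ := (mem_simplePaths E).mp hL
  obtain ⟨v, r, rfl⟩ := List.exists_cons_of_ne_nil hne
  have hv : {v} ⊆ T := Finset.singleton_subset_iff.mpr (hLT v List.mem_cons_self)
  calc pathTermIn E d wt T (v :: r) * (blockProj T * Mz E d wt * blockProj {α})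
      = pathTermIn E d wt T (v :: r) *
          (blockProj {v} * blockProj T * Mz E d wt * blockProj {α}) := by
        conv_lhs => rw [← pathTermIn_cons_mul_blockProj]
        simp only [mul_assoc]
    _ = _ := by
        rw [blockProj_mul_blockProj, Finset.inter_eq_left.mpr hv, blockProj_mul_Mz_mul_blockProj]
        by_cases hE : E α v <;> simp [hE, hch]

lemma filter_head_simplePaths (hα : α ∈ S) :
    (simplePaths E S).filter (fun L => L.head? = some α) =
      insert [α] (((simplePaths E (S.erase α)).filter fun L => (α :: L).IsChain E).image
        (α :: ·)) := by
  ext L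
  simp only [Finset.mem_filter, Finset.mem_insert, Finset.mem_image, mem_simplePaths]
  rcases L with _ | ⟨v, r⟩
  · simp
  · simp only [Finset.mem_erase, List.head?_cons, Option.some.injEq, List.cons.injEq]
    rcases r with _ | ⟨u, r⟩ <;> grind

lemma pathSum_mul_blockProj_singleton (hα : α ∈ S) :
    pathSum E d wt S * blockProj {α} =
      FMg E d wt S α + pathSum E d wt (S.erase α) *
        (blockProj (S.erase α) * Mz E d wt * blockProj {α}) * FMg E d wt S α := by
  have hterm : ∀ L ∈ simplePaths E S, pathTermIn E d wt S L * blockProj {α} =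
      if L.head? = some α then pathTermIn E d wt S L else 0 := by
    intro L hL
    obtain ⟨v, r, rfl⟩ := exists_cons_of_mem_simplePaths E hL
    rcases eq_or_ne v α with rfl | hv
    · simp [pathTermIn_cons_mul_blockProj]
    · simpa [hv] using mul_eq_zero_of_disjoint (pathTermIn_cons_mul_blockProj S v r)
        (isIdempotentElem_blockProj {α}).eq (Finset.disjoint_singleton.mpr hv)
  rw [pathSum, Finset.sum_mul, Finset.sum_congr rfl hterm, ← Finset.sum_filter,
    filter_head_simplePaths hα, Finset.sum_insert (by simp [mem_simplePaths]),
    Finset.sum_image fun _ _ _ _ h => List.cons_injective h,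
    pathSum_mul_blockProj_mul_Mz_mul_blockProj, Finset.sum_mul]
  congr 1
  · simp [pathTermIn, pathG]
  · refine Finset.sum_congr rfl fun L hL => ?_
    obtain ⟨v, r, rfl⟩ := exists_cons_of_mem_simplePaths E (Finset.mem_filter.mp hL).1
    exact pathTermIn_cons_cons S α v r

lemma filter_ne_nil_simpleCycles (S : Finset V) (α : V) :
    (simpleCycles E S α).filter (fun c => ¬c = []) =
      (simplePaths E (S.erase α)).filter fun c => (α :: (c ++ [α])).IsChain E := by
  ext c
  simp only [Finset.mem_filter, mem_simpleCycles, mem_simplePaths,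
    List.isChain_cons_append_singleton_iff, Finset.mem_erase]
  constructor
  · rintro ⟨⟨hnd, hαc, hS, hch, hlast⟩, hne⟩
    exact ⟨⟨hnd, hne, fun v hv => ⟨ne_of_mem_of_not_mem hv hαc, hS v hv⟩, hch.tail⟩,
      hch, hlast⟩
  · rintro ⟨⟨hnd, hne, hS, -⟩, hch, hlast⟩
    exact ⟨⟨hnd, fun h => (hS α h).1 rfl, fun v hv => (hS v hv).2, hch, hlast⟩, hne⟩

lemma cycG_FMg_cons (α : V) : ∀ (r : List V) (T : Finset V) (prev v : V),
    cycG d wt (FMg E d wt) α T prev (v :: r) =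
      embW d wt α (r.getLastD v) * pathG E d wt T v r * embW d wt v prev
  | [], T, prev, v => by rw [cycG, cycG, pathG, List.getLastD_nil]
  | u :: r, T, prev, v => by
    rw [cycG, cycG_FMg_cons α r, pathG, List.getLastD_cons]
    simp only [mul_assoc]

lemma blockProj_mul_Mz_mul_pathTermIn (T : Finset V) (α v : V) (r : List V) :
    blockProj {α} * Mz E d wt *
        ((X : ℂ⟦X⟧) • (pathTermIn E d wt T (v :: r) * embW d wt v α)) =
      if E (r.getLastD v) α then
        (X : ℂ⟦X⟧) ^ (r.length + 2) • cycG d wt (FMg E d wt) α T α (v :: r)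
      else 0 := by
  rw [← blockProj_mul_pathTermIn_cons, Matrix.mul_smul]
  simp only [← mul_assoc]
  rw [blockProj_mul_Mz_mul_blockProj, cycG_FMg_cons, pathTermIn]
  split_ifs
  · simp only [Matrix.smul_mul, Matrix.mul_smul, smul_smul, mul_assoc]
    congr 1
    ring
  · simp

lemma cycleSum_FMg_eq (S : Finset V) (α : V) :
    cycleSum E d wt (FMg E d wt) S α =
      blockProj {α} * Mz E d wt * blockProj {α} +
        blockProj {α} * Mz E d wt *
          (pathSum E d wt (S.erase α) *
            (blockProj (S.erase α) * Mz E d wt * blockProj {α})) := by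
  rw [cycleSum, ← Finset.sum_filter_add_sum_filter_not _ (· = [])]
  congr 1
  · rw [Finset.sum_filter, Finset.sum_ite_eq', blockProj_mul_Mz_mul_blockProj]
    exact if_congr (nil_mem_simpleCycles_iff E) (by simp [cycG]) rfl
  · have hterm : ∀ L ∈ (simplePaths E (S.erase α)).filter (fun L => (α :: L).IsChain E),
        blockProj {α} * Mz E d wt * ((X : ℂ⟦X⟧) •
          (pathTermIn E d wt (S.erase α) L * embW d wt (L.headD α) α)) =
        if E (L.getLastD α) α then (X : ℂ⟦X⟧) ^ (L.length + 1) •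
          cycG d wt (FMg E d wt) α (S.erase α) α L else 0 := by
      intro L hL
      obtain ⟨v, r, rfl⟩ := exists_cons_of_mem_simplePaths E (Finset.mem_filter.mp hL).1
      rw [List.headD_cons, List.getLastD_cons, List.length_cons]
      exact blockProj_mul_Mz_mul_pathTermIn _ α v r
    rw [filter_ne_nil_simpleCycles, pathSum_mul_blockProj_mul_Mz_mul_blockProj, Finset.mul_sum,
      Finset.sum_congr rfl hterm, ← Finset.sum_filter, Finset.filter_filter]
    exact Finset.sum_congr (Finset.filter_congr fun L _ =>
      List.isChain_cons_append_singleton_iff) fun _ _ => rfl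

end Decomposition

/-- Schur complement: if `R` inverts `q (1 - M) q` on the `q`-corner and `F` inverts the Schur
complement `p - p M p - p M R q M p` on the `p`-corner, then `F + R (q M p) F` is the `p`-column
of the inverse of `(p + q) (1 - M) (p + q)`. -/
lemma block_column_inverse {A : Type*} [Ring A] {p q M F R : A} (hpq : p * q = 0)
    (hqp : q * p = 0) (hq : IsIdempotentElem q) (hF : p * F = F) (hR : q * R = R)
    (hRinv : q * (1 - M) * q * R = q)
    (hFinv : (1 - (p * M * p + p * M * (R * (q * M * p)))) * F = p) :
    (p + q) * (1 - M) * (p + q) * (F + R * (q * M * p) * F) = p := by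
  have hX : (p + q) * (F + R * (q * M * p) * F) = F + R * (q * M * p) * F := by
    have hpqF : (p + q) * F = F := by
      rw [add_mul, hF, ← hF, ← mul_assoc, hqp, zero_mul, add_zero]
    have hpqR : (p + q) * R = R := by
      rw [add_mul, hR, ← hR, ← mul_assoc, hpq, zero_mul, zero_add]
    rw [mul_add, hpqF, ← mul_assoc, ← mul_assoc, hpqR]
  have hqMR : q * M * R = R - q := by
    have h : q * (1 - M) * q * R = R - q * M * R := by
      calc q * (1 - M) * q * R = q * (q * R) - q * M * (q * R) := by noncomm_ring
        _ = R - q * M * R := by rw [hR, hR]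
    calc q * M * R = R - (R - q * M * R) := by abel
      _ = R - q := by rw [← h, hRinv]
  have hpMX : p * M * (F + R * (q * M * p) * F) = (p * M * p + p * M * (R * (q * M * p))) * F := by
    calc p * M * (F + R * (q * M * p) * F) = p * M * (p * F) + p * M * (R * (q * M * p)) * F := by
          rw [hF]; noncomm_ring
      _ = _ := by noncomm_ring
  have hqMX : q * M * (F + R * (q * M * p) * F) = R * (q * M * p) * F := by
    have hqMF : q * M * F = q * M * p * F := by rw [mul_assoc _ p, hF]
    have hqW : q * (q * M * p) = q * M * p := by simp only [← mul_assoc, hq.eq]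
    calc q * M * (F + R * (q * M * p) * F) = q * M * F + q * M * R * (q * M * p) * F := by
          noncomm_ring
      _ = R * (q * M * p) * F := by
          rw [hqMF, hqMR, sub_mul, sub_mul, hqW]; abel
  calc (p + q) * (1 - M) * (p + q) * (F + R * (q * M * p) * F)
      = (p + q) * (1 - M) * ((p + q) * (F + R * (q * M * p) * F)) := by noncomm_ring
    _ = (p + q) * (1 - M) * (F + R * (q * M * p) * F) := by rw [hX]
    _ = (p + q) * (F + R * (q * M * p) * F) - p * M * (F + R * (q * M * p) * F)
          - q * M * (F + R * (q * M * p) * F) := by noncomm_ring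
    _ = (1 - (p * M * p + p * M * (R * (q * M * p)))) * F := by
        rw [hX, hpMX, hqMX]; noncomm_ring
    _ = p := hFinv

section Inversion

variable [Fintype V] [DecidableEq V] {E : V → V → Prop} {d : V → ℕ}
  {wt : ∀ ν μ : V, Matrix (Fin (d ν)) (Fin (d μ)) ℂ}

lemma corner_mul_pathSum_mul_blockProj {S : Finset V} {α : V} (hα : α ∈ S)
    (ih : blockProj (S.erase α) * (1 - Mz E d wt) * blockProj (S.erase α) *
      pathSum E d wt (S.erase α) = blockProj (S.erase α)) :
    blockProj S * (1 - Mz E d wt) * blockProj S * pathSum E d wt S * blockProj {α} =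
      blockProj {α} := by
  have hdisj : Disjoint {α} (S.erase α) := Finset.disjoint_singleton_left.mpr (by simp)
  rw [mul_assoc _ (pathSum E d wt S), pathSum_mul_blockProj_singleton hα,
    blockProj_eq_singleton_add_erase hα]
  refine block_column_inverse (blockProj_mul_blockProj_of_disjoint hdisj)
    (blockProj_mul_blockProj_of_disjoint hdisj.symm) (isIdempotentElem_blockProj _)
    (blockProj_mul_FMg S α) (blockProj_mul_pathSum _) ih ?_
  rw [← cycleSum_FMg_eq, one_sub_cycleSum_mul_FMg hα]

lemma corner_mul_pathSum (S : Finset V) :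
    blockProj S * (1 - Mz E d wt) * blockProj S * pathSum E d wt S = blockProj S := by
  induction S using Finset.strongInduction with
  | H S ih =>
  calc blockProj S * (1 - Mz E d wt) * blockProj S * pathSum E d wt S
      = ∑ α ∈ S,
          blockProj S * (1 - Mz E d wt) * blockProj S * pathSum E d wt S * blockProj {α} := by
        rw [← Finset.mul_sum, sum_blockProj_singleton, mul_assoc _ (pathSum E d wt S),
          pathSum_mul_blockProj]
    _ = ∑ α ∈ S, blockProj {α} := Finset.sum_congr rfl fun α hα =>
        corner_mul_pathSum_mul_blockProj hα (ih _ (Finset.erase_ssubset hα))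
    _ = blockProj S := sum_blockProj_singleton S

end Inversion

theorem stmt12_general {V : Type} [Fintype V] [DecidableEq V] (E : V → V → Prop)
    (d : V → ℕ)
    (wt : ∀ ν μ : V, Matrix (Fin (d ν)) (Fin (d μ)) ℂ) :
    IsUnit (1 - Mz E d wt) ∧
    ∀ (α ω : V) (i : Fin (d ω)) (j : Fin (d α)),
      (1 - Mz E d wt)⁻¹ ⟨ω, i⟩ ⟨α, j⟩ =
        (∑ᶠ L ∈ {L : List V | L.Nodup ∧ L.head? = some α ∧ L.getLast? = some ω ∧
            L.Chain' E}, pathTerm E d wt L) ⟨ω, i⟩ ⟨α, j⟩ := by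
  have hinv : (1 - Mz E d wt) * pathSum E d wt Finset.univ = 1 := by
    simpa [blockProj_univ] using corner_mul_pathSum (E := E) (wt := wt) Finset.univ
  refine ⟨(Matrix.isUnit_iff_isUnit_det _).mpr (Matrix.isUnit_det_of_right_inverse hinv),
    fun α ω i j => ?_⟩
  rw [Matrix.inv_eq_right_inv hinv, pathSum_apply, pathTermIn_univ, ← Matrix.sum_apply,
    ← finsum_mem_coe_finset, ← setOf_path_eq_filter_simplePaths]
  rfl -- the deprecated `List.Chain'` of the statement unfolds to `List.IsChain`

/-- Weighted path-sum with noncommuting matrix weights: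
`Id − M(z)` is invertible over `ℂ[[z]]`, and for all vertices `α`, `ω` the
`(ω, α)` block of `(Id − M(z))⁻¹` equals the sum, over all simple paths
`π = (σ₀ σ₁ ⋯ σ_p)` from `α` to `ω`, of
`z^p · F_{V∖{σ₀,…,σ_{p-1}}}(σ_p) · w_{σ_p σ_{p-1}} ⋯ w_{σ₁ σ₀} · F_V(σ₀)`
(for `α = ω` the only path is trivial and the summand is `F_V(α)`). -/
theorem stmt12 {V : Type} [Fintype V] [DecidableEq V] (E : V → V → Prop)
    (d : V → ℕ) (hd : ∀ ν : V, 1 ≤ d ν)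
    (wt : ∀ ν μ : V, Matrix (Fin (d ν)) (Fin (d μ)) ℂ) :
    IsUnit (1 - Mz E d wt) ∧
    ∀ (α ω : V) (i : Fin (d ω)) (j : Fin (d α)),
      (1 - Mz E d wt)⁻¹ ⟨ω, i⟩ ⟨α, j⟩ =
        (∑ᶠ L ∈ {L : List V | L.Nodup ∧ L.head? = some α ∧ L.getLast? = some ω ∧
            L.Chain' E}, pathTerm E d wt L) ⟨ω, i⟩ ⟨α, j⟩ :=
  stmt12_general E d wt
end
end

section
/- Simple paths yield chains of nested simple cycles: let G be a finite quiver and let (ν0 ν1 ⋯ νℓ) be a simple path of G (ℓ ≥ 1) such that each reverse edge (ν(j+1), νj) also belongs to E(G). For 0 ≤ j ≤ ℓ−1 set bj = (νj ν(j+1) νj), a nontrivial simple cycle. Then the right-nested product b0 ⊙ (b1 ⊙ (⋯ ⊙ b(ℓ−1))) is defined (every successive nesting canonical) and equals the closed walk (ν0 ν1 ⋯ ν(ℓ−1) νℓ ν(ℓ−1) ⋯ ν1 ν0); if moreover G has a self-loop L = (νℓ νℓ), then b0 ⊙ (b1 ⊙ (⋯ ⊙ (b(ℓ−1) ⊙ L)))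 is defined and equals the closed walk (ν0 ν1 ⋯ ν(ℓ−1) νℓ νℓ ν(ℓ−1) ⋯ ν1 ν0), a chain of ℓ + 1 recursively nested nontrivial simple cycles whose outermost cycle is based at ν0. -/
namespace QWalk

/-- Right-nested product along a nonempty list:
`RNest [c₁, …, cₙ] w` means `c₁ ⊙ (c₂ ⊙ (⋯ ⊙ (c_{n-1} ⊙ cₙ))) = w`, every
successive nesting being a defined (canonical) nesting product. -/
inductive RNest {V : Type} {E : V → V → Prop} :
    List (QWalk V E) → QWalk V E → Prop
  | single (a : QWalk V E) : RNest [a] a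
  | cons {a u w : QWalk V E} {l : List (QWalk V E)} :
      RNest l u → IsNest a u w → RNest (a :: l) w

end QWalk

/-!
Because the path is simple, `ν_j` never occurs in the inner product `b_{j+1} ⊙ (⋯)`, which is a
cycle off `ν_{j+1}` through `ν_{j+1}, …, ν_ℓ` only. So each couple `(b_j, b_{j+1} ⊙ ⋯)` is
canonical, and nesting into `b_j = (ν_j ν_{j+1} ν_j)` just surrounds the inner cycle by `ν_j`.
Starting from the innermost cycle (`b_{ℓ-1}`, or the loop `L`) and moving outwards builds the
palindromic walk one layer at a time.
-/

namespace QWalk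

variable {V : Type} {E : V → V → Prop}

theorem first_eq_of_verts_eq_cons {w : QWalk V E} {x : V} {l : List V}
    (h : w.verts = x :: l) : w.first = x := by
  simp only [first, h, List.head_cons]

theorem last_eq_of_verts_eq_append_singleton {w : QWalk V E} {x : V} {l : List V}
    (h : w.verts = l ++ [x]) : w.last = x := by
  simp only [last, h, List.getLast_append_singleton]

theorem isCycleOff_of_verts_eq {w : QWalk V E} {x : V} {l : List V}
    (h : w.verts = x :: (l ++ [x])) : w.IsCycleOff x := by
  have hlast : w.last = x := last_eq_of_verts_eq_append_singleton (l := x :: l) h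
  exact ⟨(first_eq_of_verts_eq_cons h).trans hlast.symm, first_eq_of_verts_eq_cons h⟩

theorem not_trivial_of_verts_eq_cons_cons {w : QWalk V E} {x y : V} {l : List V}
    (h : w.verts = x :: y :: l) : ¬ w.Trivial := by
  simp [Trivial, len, h]

def backtrack {x y : V} (hxy : E x y) (hyx : E y x) : QWalk V E :=
  ⟨[x, y, x], List.cons_ne_nil _ _, List.isChain_cons_cons.2 ⟨hxy, List.isChain_pair.2 hyx⟩⟩

def loop {t : V} (h : E t t) : QWalk V E :=
  ⟨[t, t], List.cons_ne_nil _ _, List.isChain_pair.2 h⟩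

theorem backtrack_isCycleOff {x y : V} (hxy : E x y) (hyx : E y x) :
    (backtrack hxy hyx).IsCycleOff x :=
  isCycleOff_of_verts_eq (l := [y]) rfl

theorem loop_isCycleOff {t : V} (h : E t t) : (loop h).IsCycleOff t :=
  isCycleOff_of_verts_eq (l := []) rfl

theorem backtrack_isSimpleCycle {x y : V} (hxy : E x y) (hyx : E y x) (hne : x ≠ y) :
    (backtrack hxy hyx).IsSimpleCycle :=
  ⟨(backtrack_isCycleOff hxy hyx).1, by simp [backtrack, hne.symm]⟩

theorem loop_isSimpleCycle {t : V} (h : E t t) : (loop h).IsSimpleCycle :=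
  ⟨(loop_isCycleOff h).1, by simp [loop]⟩

theorem exists_isNest_backtrack {x y : V} (hxy : E x y) (hyx : E y x) {u : QWalk V E}
    (hu : u.IsCycleOff y) (hx : x ∉ u.verts) :
    ∃ w, IsNest (backtrack hxy hyx) u w ∧ w.verts = x :: (u.verts ++ [x]) := by
  have hlast : y = u.last := hu.2.symm.trans hu.1
  have hchain : (x :: (u.verts ++ [x])).IsChain E := by
    refine List.IsChain.cons_of_ne_nil (by simp) (u.chain.append (.singleton x) ?_) ?_
    · simp only [List.getLast?_eq_some_getLast u.ne, Option.mem_def, Option.some.injEq,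
        List.head?_cons, forall_eq']
      show E u.last x
      rw [← hlast]; exact hyx
    · simp only [List.head_append_of_ne_nil u.ne]
      show E x u.first
      rw [hu.2]; exact hxy
  refine ⟨⟨_, List.cons_ne_nil _ _, hchain⟩, ⟨y, [x], [x], hu.2, hlast.symm, rfl, ?_, ?_, rfl⟩, rfl⟩
  · have hy : y ∈ u.verts := hu.2 ▸ List.head_mem u.ne
    simpa using fun h : y = x => hx (h ▸ hy)
  · exact Or.inr (by simpa using fun _ => hx)

def IsBacktrackChain (P : List V) (bs : List (QWalk V E)) : Prop :=
  bs.length + 1 = P.length ∧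
    ∀ (j : ℕ) (b : QWalk V E), bs[j]? = some b →
      ∃ x y : V, P[j]? = some x ∧ P[j + 1]? = some y ∧
        b.verts = [x, y, x] ∧ b.IsSimpleCycle ∧ ¬ b.Trivial

theorem isBacktrackChain_singleton (x : V) : IsBacktrackChain [x] ([] : List (QWalk V E)) :=
  ⟨rfl, by simp⟩

theorem IsBacktrackChain.cons {P : List V} {bs : List (QWalk V E)} (h : IsBacktrackChain P bs)
    {x : V} (hP : P ≠ []) (hxy : E x (P.head hP)) (hyx : E (P.head hP) x) (hne : x ≠ P.head hP) :
    IsBacktrackChain (x :: P) (backtrack hxy hyx :: bs) := by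
  refine ⟨by simp [h.1], fun j b hb => ?_⟩
  cases j with
  | zero =>
    obtain rfl : backtrack hxy hyx = b := by simpa using hb
    exact ⟨x, P.head hP, rfl, by simp [← List.head?_eq_getElem?, List.head?_eq_some_head hP], rfl,
      backtrack_isSimpleCycle hxy hyx hne, not_trivial_of_verts_eq_cons_cons rfl⟩
  | succ j => simpa using h.2 j b (by simpa using hb)

theorem IsBacktrackChain.append_singleton {pre : List V} {a t : V} {bs : List (QWalk V E)}
    (h : IsBacktrackChain (pre ++ [a]) bs) (hat : E a t) (hta : E t a) (hne : a ≠ t) :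
    IsBacktrackChain (pre ++ [a] ++ [t]) (bs ++ [backtrack hat hta]) := by
  obtain ⟨hlen, hbs⟩ := h
  simp only [List.length_append, List.length_singleton, Nat.add_right_cancel_iff] at hlen
  refine ⟨by simp [hlen], fun j b hb => ?_⟩
  rcases lt_trichotomy j bs.length with hj | rfl | hj
  · rw [List.getElem?_append_left hj] at hb
    obtain ⟨x, y, hx, hy, hrest⟩ := hbs j b hb
    refine ⟨x, y, ?_, ?_, hrest⟩
    · rw [List.getElem?_append_left (by simp; omega), hx]
    · rw [List.getElem?_append_left (by simp; omega), hy]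
  · obtain rfl : backtrack hat hta = b := by simpa using hb
    refine ⟨a, t, ?_, ?_, rfl, backtrack_isSimpleCycle hat hta hne,
      not_trivial_of_verts_eq_cons_cons rfl⟩
    · rw [List.getElem?_append_left (by simp; omega)]
      simp [hlen]
    · simp [hlen]
  · simp [List.getElem?_eq_none (by simp; omega : (bs ++ [backtrack hat hta]).length ≤ j)] at hb

theorem exists_rNest_backtracks_append (pre : List V) {t : V} (hnd : (pre ++ [t]).Nodup)
    (hfwd : (pre ++ [t]).IsChain E) (hbwd : (pre ++ [t]).IsChain (fun x y => E y x))
    {l : List (QWalk V E)} {u : QWalk V E} (hl : RNest l u) (hu : u.IsCycleOff t)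
    (hdisj : ∀ v ∈ pre, v ∉ u.verts) :
    ∃ (bs : List (QWalk V E)) (w : QWalk V E), IsBacktrackChain (pre ++ [t]) bs ∧
      RNest (bs ++ l) w ∧ w.IsCycleOff ((pre ++ [t]).head (by simp)) ∧
      w.verts = pre ++ u.verts ++ pre.reverse := by
  induction pre with
  | nil => exact ⟨[], u, isBacktrackChain_singleton t, hl, hu, by simp⟩
  | cons x pre ih =>
    have hP : pre ++ [t] ≠ [] := by simp
    obtain ⟨hx, hnd⟩ := List.nodup_cons.1 hnd
    obtain ⟨bs, w, hbs, hrn, hw, hverts⟩ :=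
      ih hnd hfwd.tail hbwd.tail fun v hv => hdisj v (List.mem_cons_of_mem x hv)
    have hxy : E x ((pre ++ [t]).head hP) := hfwd.rel_head? (List.head?_eq_some_head hP)
    have hyx : E ((pre ++ [t]).head hP) x := hbwd.rel_head? (List.head?_eq_some_head hP)
    have hxw : x ∉ w.verts := by
      have hxpre : x ∉ pre := fun h => hx (List.mem_append_left _ h)
      simp only [hverts, List.mem_append, List.mem_reverse, not_or]
      exact ⟨⟨hxpre, hdisj x List.mem_cons_self⟩, hxpre⟩
    obtain ⟨w', hnest, hw'⟩ := exists_isNest_backtrack hxy hyx hw hxw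
    refine ⟨backtrack hxy hyx :: bs, w', hbs.cons hP hxy hyx ?_, hrn.cons hnest,
      isCycleOff_of_verts_eq hw', by simp [hw', hverts]⟩
    exact fun h => hx (h ▸ List.head_mem hP)

theorem IsBacktrackChain.length_eq_len {p : QWalk V E} {bs : List (QWalk V E)}
    (h : IsBacktrackChain p.verts bs) : bs.length = p.len := by
  have := h.1
  simp only [len]
  omega

theorem exists_rNest_backtracks {p : QWalk V E} (hp : p.IsSimplePath) (hl : 1 ≤ p.len)
    (hbwd : p.verts.IsChain (fun x y => E y x)) :
    ∃ (bs : List (QWalk V E)) (w : QWalk V E), IsBacktrackChain p.verts bs ∧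
      RNest bs w ∧ w.verts = p.verts ++ p.verts.reverse.tail := by
  obtain ⟨pre, t, hpt⟩ := (List.eq_nil_or_concat' p.verts).resolve_left p.ne
  obtain ⟨pre, a, rfl⟩ := (List.eq_nil_or_concat' pre).resolve_left <| by
    rintro rfl
    simp [len, hpt] at hl
  have hfwd : p.verts.IsChain E := p.chain
  rw [IsSimplePath, hpt] at hp
  rw [hpt] at hfwd hbwd
  have hnd : (pre ++ [a]).Nodup := hp.sublist (by simp)
  have hne : a ≠ t := by simpa using hp.sublist (l₁ := [a, t]) (by simp)
  have hdisj : ∀ v ∈ pre, v ∉ [a, t, a] := by grind [List.nodup_append]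
  simp only [List.append_assoc, List.cons_append, List.nil_append,
    List.isChain_append_cons_cons] at hfwd hbwd
  obtain ⟨bs, w, hbs, hrn, -, hverts⟩ := exists_rNest_backtracks_append pre hnd hfwd.1 hbwd.1
    (.single _) (backtrack_isCycleOff hfwd.2.1 hbwd.2.1) hdisj
  exact ⟨_, w, hpt ▸ hbs.append_singleton hfwd.2.1 hbwd.2.1 hne, hrn,
    by simp [hverts, hpt, backtrack]⟩

theorem exists_rNest_backtracks_loop {p : QWalk V E} (hp : p.IsSimplePath)
    (hbwd : p.verts.IsChain (fun x y => E y x)) (hloop : E p.last p.last) :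
    ∃ (bs : List (QWalk V E)) (lp w : QWalk V E), IsBacktrackChain p.verts bs ∧
      lp.verts = [p.last, p.last] ∧ lp.IsSimpleCycle ∧ ¬ lp.Trivial ∧
      RNest (bs ++ [lp]) w ∧ w.verts = p.verts ++ p.last :: p.verts.reverse.tail := by
  obtain ⟨pre, t, hpt⟩ := (List.eq_nil_or_concat' p.verts).resolve_left p.ne
  rw [last_eq_of_verts_eq_append_singleton hpt] at hloop ⊢
  have hfwd : p.verts.IsChain E := p.chain
  rw [IsSimplePath, hpt] at hp
  rw [hpt] at hfwd hbwd
  have hdisj : ∀ v ∈ pre, v ∉ [t, t] := by grind [List.nodup_append]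
  obtain ⟨bs, w, hbs, hrn, -, hverts⟩ := exists_rNest_backtracks_append pre hp hfwd hbwd
    (.single _) (loop_isCycleOff hloop) hdisj
  exact ⟨bs, loop hloop, w, hpt ▸ hbs, rfl, loop_isSimpleCycle hloop,
    not_trivial_of_verts_eq_cons_cons rfl, hrn, by simp [hverts, hpt, loop]⟩

end QWalk

theorem stmt14_general {V : Type} (E : V → V → Prop)
    (p : QWalk V E) (hp : p.IsSimplePath) (hl : 1 ≤ p.len)
    (hrev : p.verts.Chain' (fun x y => E y x)) :
    (∃ (bs : List (QWalk V E)) (w : QWalk V E),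
        bs.length = p.len ∧
        (∀ (j : ℕ) (b : QWalk V E), bs[j]? = some b →
          ∃ x y : V, p.verts[j]? = some x ∧ p.verts[j + 1]? = some y ∧
            b.verts = [x, y, x] ∧ b.IsSimpleCycle ∧ ¬ b.Trivial) ∧
        QWalk.RNest bs w ∧ w.verts = p.verts ++ p.verts.reverse.tail) ∧
    (E p.last p.last →
      ∃ (bs : List (QWalk V E)) (lp w : QWalk V E),
        bs.length = p.len ∧
        (∀ (j : ℕ) (b : QWalk V E), bs[j]? = some b →
          ∃ x y : V, p.verts[j]? = some x ∧ p.verts[j + 1]? = some y ∧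
            b.verts = [x, y, x] ∧ b.IsSimpleCycle ∧ ¬ b.Trivial) ∧
        lp.verts = [p.last, p.last] ∧ lp.IsSimpleCycle ∧ ¬ lp.Trivial ∧
        QWalk.RNest (bs ++ [lp]) w ∧
        w.verts = p.verts ++ p.last :: p.verts.reverse.tail) := by
  refine ⟨?_, fun hloop => ?_⟩
  · obtain ⟨bs, w, hbs, hrest⟩ := QWalk.exists_rNest_backtracks hp hl hrev
    exact ⟨bs, w, hbs.length_eq_len, hbs.2, hrest⟩
  · obtain ⟨bs, lp, w, hbs, hrest⟩ := QWalk.exists_rNest_backtracks_loop hp hrev hloop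
    exact ⟨bs, lp, w, hbs.length_eq_len, hbs.2, hrest⟩

/-- Simple paths yield chains of nested simple cycles: let
`p = (ν₀ ν₁ ⋯ ν_ℓ)` be a simple path (`ℓ ≥ 1`) all of whose reverse edges also belong
to the quiver, and let `b_j = (ν_j ν_{j+1} ν_j)` be the corresponding back-track
simple cycles.  Then `b₀ ⊙ (b₁ ⊙ (⋯ ⊙ b_{ℓ-1}))` is defined and equals the closed
walk `(ν₀ ν₁ ⋯ ν_{ℓ-1} ν_ℓ ν_{ℓ-1} ⋯ ν₁ ν₀)`; if moreover there is a self-loop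
`L = (ν_ℓ ν_ℓ)`, then `b₀ ⊙ (b₁ ⊙ (⋯ ⊙ (b_{ℓ-1} ⊙ L)))` is defined and equals
`(ν₀ ν₁ ⋯ ν_{ℓ-1} ν_ℓ ν_ℓ ν_{ℓ-1} ⋯ ν₁ ν₀)`, a chain of `ℓ + 1` recursively nested
nontrivial simple cycles whose outermost cycle is based at `ν₀`. -/
theorem stmt14 {V : Type} [Fintype V] (E : V → V → Prop)
    (p : QWalk V E) (hp : p.IsSimplePath) (hl : 1 ≤ p.len)
    (hrev : p.verts.Chain' (fun x y => E y x)) :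
    (∃ (bs : List (QWalk V E)) (w : QWalk V E),
        bs.length = p.len ∧
        (∀ (j : ℕ) (b : QWalk V E), bs[j]? = some b →
          ∃ x y : V, p.verts[j]? = some x ∧ p.verts[j + 1]? = some y ∧
            b.verts = [x, y, x] ∧ b.IsSimpleCycle ∧ ¬ b.Trivial) ∧
        QWalk.RNest bs w ∧ w.verts = p.verts ++ p.verts.reverse.tail) ∧
    (E p.last p.last →
      ∃ (bs : List (QWalk V E)) (lp w : QWalk V E),
        bs.length = p.len ∧
        (∀ (j : ℕ) (b : QWalk V E), bs[j]? = some b →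
          ∃ x y : V, p.verts[j]? = some x ∧ p.verts[j + 1]? = some y ∧
            b.verts = [x, y, x] ∧ b.IsSimpleCycle ∧ ¬ b.Trivial) ∧
        lp.verts = [p.last, p.last] ∧ lp.IsSimpleCycle ∧ ¬ lp.Trivial ∧
        QWalk.RNest (bs ++ [lp]) w ∧
        w.verts = p.verts ++ p.last :: p.verts.reverse.tail) :=
  stmt14_general E p hp hl hrev
end
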